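/- arXiv:1207.0184 — 2 statements merged into one kernel-verified Lean document; each statement's English description precedes it below -/
import Mathlib

section
/- In the case b ≡ 4 (mod 5): let n ≥ 0 and consider coefficient sequences (αⱼ⁺)_{j=0}^{3n+4}, (αⱼ⁻)_{j=0}^{3n+4} satisfying: α_{j+n+1}⁺ = c_{1j}·αⱼ⁻ for n+2 ≤ j ≤ 2n+3, αⱼ⁻ = 0 for 2n+4 ≤ j ≤ 3n+4, αⱼ⁺ = c_{2j}·α_{j+2n+3}⁻ for 0 ≤ j ≤ n+1, αⱼ⁺ = 0 for n+2 ≤ j ≤ 2n+2, αⱼ⁺ = c_{3j}·α_{j+n+1}⁻ for 0 ≤ j ≤ n+1, and αⱼ⁻ = 0 for 0 ≤ j ≤ n, where all c_* are nonzero. Then the solution space has dimension at most 1: α₀⁺, α_{n+1}⁻, α_{2n+3}⁻, α_{3n+4}⁺ are pairwise proportional and all other coefficients vanish. -/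
/-!
The vanishing of `α⁻` on the top block `[2n+4, 3n+4]` propagates through the relations, whose
coefficients are nonzero: via `c₂` it kills `α⁺` on `[1, n+1]`, via `c₃` then `α⁻` on
`[n+2, 2n+2]`, and via `c₁` then `α⁺` on `[2n+3, 3n+3]`. With the prescribed zero blocks this
leaves only `α⁺₀, α⁻_{n+1}, α⁻_{2n+3}, α⁺_{3n+4}`, and the relations at `j = 0` (through `c₃`
and `c₂`) and at `j = 2n+3` (through `c₁`) make them multiples of `α⁺₀`.
-/

namespace CaseB4

variable {M₀ : Type*} {n : ℕ} {αp αm : ℕ → M₀}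

lemma plus_eq_zero_low [MulZeroClass M₀] {c₂ : ℕ → M₀}
    (h2 : ∀ j, 2 * n + 4 ≤ j → j ≤ 3 * n + 4 → αm j = 0)
    (h3 : ∀ j ≤ n + 1, αp j = c₂ j * αm (j + 2 * n + 3)) :
    ∀ j, 1 ≤ j → j ≤ n + 1 → αp j = 0 := fun j hj₁ hj₂ => by
  rw [h3 j hj₂, h2 _ (by omega) (by omega), mul_zero]

lemma minus_eq_zero_middle [MulZeroClass M₀] [NoZeroDivisors M₀] {c₃ : ℕ → M₀}
    (hc₃ : ∀ j, c₃ j ≠ 0) (h5 : ∀ j ≤ n + 1, αp j = c₃ j * αm (j + n + 1))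
    (hp : ∀ j, 1 ≤ j → j ≤ n + 1 → αp j = 0) :
    ∀ j, n + 2 ≤ j → j ≤ 2 * n + 2 → αm j = 0 := fun j hj₁ hj₂ => by
  have h := h5 (j - (n + 1)) (by omega)
  rw [show j - (n + 1) + n + 1 = j by omega, hp _ (by omega) (by omega)] at h
  exact (mul_eq_zero.mp h.symm).resolve_left (hc₃ _)

lemma plus_eq_zero_high [MulZeroClass M₀] {c₁ : ℕ → M₀}
    (h1 : ∀ j, n + 2 ≤ j → j ≤ 2 * n + 3 → αp (j + n + 1) = c₁ j * αm j)
    (hm : ∀ j, n + 2 ≤ j → j ≤ 2 * n + 2 → αm j = 0) :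
    ∀ j, 2 * n + 3 ≤ j → j ≤ 3 * n + 3 → αp j = 0 := fun j hj₁ hj₂ => by
  have h := h1 (j - (n + 1)) (by omega) (by omega)
  rwa [show j - (n + 1) + n + 1 = j by omega, hm _ (by omega) (by omega), mul_zero] at h

end CaseB4

lemma exists_ne_zero_eq_mul_of_eq_mul {G₀ : Type*} [GroupWithZero G₀] {x y c : G₀}
    (hc : c ≠ 0) (h : x = c * y) : ∃ d, d ≠ 0 ∧ y = d * x :=
  ⟨c⁻¹, inv_ne_zero hc, by rw [h, inv_mul_cancel_left₀ hc]⟩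

/-- Case `b ≡ 4 (mod 5)` (§4.5): kernel computation. Coefficient sequences
`(αⱼ⁺)`, `(αⱼ⁻)` (for `0 ≤ j ≤ 3n+4`) satisfying the listed linear relations (with
nonzero constants `c₁ⱼ, c₂ⱼ, c₃ⱼ`) are determined up to scalar by `α₀⁺`: the four
coefficients `α₀⁺, α_{n+1}⁻, α_{2n+3}⁻, α_{3n+4}⁺` are proportional with nonzero ratios
and all other coefficients vanish; so the solution space is at most 1-dimensional. -/
theorem case_b4_kernel (n : ℕ) (αp αm : ℕ → ℂ) (c₁ c₂ c₃ : ℕ → ℂ)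
    (hc₁ : ∀ j, c₁ j ≠ 0) (hc₂ : ∀ j, c₂ j ≠ 0) (hc₃ : ∀ j, c₃ j ≠ 0)
    (h1 : ∀ j, n + 2 ≤ j → j ≤ 2 * n + 3 → αp (j + n + 1) = c₁ j * αm j)
    (h2 : ∀ j, 2 * n + 4 ≤ j → j ≤ 3 * n + 4 → αm j = 0)
    (h3 : ∀ j ≤ n + 1, αp j = c₂ j * αm (j + 2 * n + 3))
    (h4 : ∀ j, n + 2 ≤ j → j ≤ 2 * n + 2 → αp j = 0)
    (h5 : ∀ j ≤ n + 1, αp j = c₃ j * αm (j + n + 1))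
    (h6 : ∀ j ≤ n, αm j = 0) :
    ∃ d₁ d₂ d₃ : ℂ, d₁ ≠ 0 ∧ d₂ ≠ 0 ∧ d₃ ≠ 0 ∧
      αm (n + 1) = d₁ * αp 0 ∧ αm (2 * n + 3) = d₂ * αp 0 ∧
      αp (3 * n + 4) = d₃ * αp 0 ∧
      (∀ j ≤ 3 * n + 4, j ≠ 0 → j ≠ 3 * n + 4 → αp j = 0) ∧
      (∀ j ≤ 3 * n + 4, j ≠ n + 1 → j ≠ 2 * n + 3 → αm j = 0) := by
  have hp_low := CaseB4.plus_eq_zero_low h2 h3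
  have hm_mid := CaseB4.minus_eq_zero_middle hc₃ h5 hp_low
  have hp_high := CaseB4.plus_eq_zero_high h1 hm_mid
  obtain ⟨d₁, hd₁, e₁⟩ := exists_ne_zero_eq_mul_of_eq_mul (hc₃ 0) (by simpa using h5 0 (by omega))
  obtain ⟨d₂, hd₂, e₂⟩ := exists_ne_zero_eq_mul_of_eq_mul (hc₂ 0) (by simpa using h3 0 (by omega))
  have e₃ : αp (3 * n + 4) = c₁ (2 * n + 3) * αm (2 * n + 3) := by
    simpa [show 2 * n + 3 + n + 1 = 3 * n + 4 by omega] using h1 (2 * n + 3) (by omega) le_rfl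
  refine ⟨d₁, d₂, c₁ (2 * n + 3) * d₂, hd₁, hd₂, mul_ne_zero (hc₁ _) hd₂, e₁, e₂,
    by rw [e₃, e₂, mul_assoc], fun j hj hj₀ hjt => ?_, fun j hj hj₁ hj₂ => ?_⟩
  · rcases lt_or_ge j (n + 2) with hj' | hj'
    · exact hp_low j (by omega) (by omega)
    rcases lt_or_ge j (2 * n + 3) with hj'' | hj''
    · exact h4 j hj' (by omega)
    · exact hp_high j hj'' (by omega)
  · rcases lt_or_ge j (n + 1) with hj' | hj'
    · exact h6 j (by omega)
    rcases lt_or_ge j (2 * n + 3) with hj'' | hj''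
    · exact hm_mid j (by omega) (by omega)
    · exact h2 j (by omega) hj
end

section
/- Let n ≥ 1 be odd and set v = binom(5n,n) X^n Y^{4n} x³ + 3·binom(5n,2n) X^{2n}Y^{3n} x²y + 3·binom(5n,2n) X^{3n}Y^{2n} xy² + binom(5n,n) X^{4n}Y^n y³ ∈ V_{3,5n}. Then the linear map T^{(3,n)}(v, ·) : V_{3,n} → V_{0,4n} given by the (3,n)-th bi-transvectant is surjective. -/
open MvPolynomial

/-- Iterated partial derivative `∂^m/∂(X i)^m` on polynomials in four variables. -/
noncomputable def pd (i : Fin 4) (m : ℕ) (f : MvPolynomial (Fin 4) ℂ) :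
    MvPolynomial (Fin 4) ℂ :=
  (fun g => pderiv i g)^[m] f

/-- The `(r,s)`-th bi-transvectant of bi-forms of bidegrees `(a,b)` and `(a',b')`
in the variables `x = X 0`, `y = X 1` and `X = X 2`, `Y = X 3`:
on pure tensors it is `T^{(r)} ⊠ T^{(s)}`, and explicitly
`T^{(r,s)}(F,G) = ((a-r)!/a!)((a'-r)!/a'!)((b-s)!/b!)((b'-s)!/b'!) ·
  Σ_{k,l} (-1)^{k+l} binom(r,k) binom(s,l)
    (∂_x^{r-k}∂_y^k ∂_X^{s-l}∂_Y^l F)(∂_x^k ∂_y^{r-k} ∂_X^l ∂_Y^{s-l} G)`. -/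
noncomputable def biT (a b a' b' r s : ℕ) (F G : MvPolynomial (Fin 4) ℂ) :
    MvPolynomial (Fin 4) ℂ :=
  (((a - r).factorial : ℂ) / (a.factorial : ℂ) *
      (((a' - r).factorial : ℂ) / (a'.factorial : ℂ)) *
      (((b - s).factorial : ℂ) / (b.factorial : ℂ)) *
      (((b' - s).factorial : ℂ) / (b'.factorial : ℂ))) •
    ∑ k ∈ Finset.range (r + 1), ∑ l ∈ Finset.range (s + 1),
      ((-1 : ℂ) ^ (k + l) * (r.choose k : ℂ) * (s.choose l : ℂ)) •
        (pd 0 (r - k) (pd 1 k (pd 2 (s - l) (pd 3 l F))) *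
          pd 0 k (pd 1 (r - k) (pd 2 l (pd 3 (s - l) G))))

/-- The space `V_{a,b}` of bi-forms of bidegree `(a,b)` on `ℙ¹×ℙ¹`, realized as the
span of the monomials `x^i y^{a-i} X^j Y^{b-j}`. -/
noncomputable def Vab (a b : ℕ) : Submodule ℂ (MvPolynomial (Fin 4) ℂ) :=
  Submodule.span ℂ
    {p | ∃ i ≤ a, ∃ j ≤ b, p = X 0 ^ i * X 1 ^ (a - i) * X 2 ^ j * X 3 ^ (b - j)}

/-!
Write `v = Σ_{i ≤ 3} C(3,i) C(5n,(i+1)n) x^{3-i} y^i X^{(i+1)n} Y^{(4-i)n}`. For a second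
argument `G = x^p y^{3-p} X^q Y^{n-q}` of full bidegree `(3,n)`, the transvectant `T^{(3,n)}(F, G)`
is a nonzero multiple of `∂_x^{3-p} ∂_y^p ∂_X^{n-q} ∂_Y^q F`. This operator kills every term of
`v` except the one with `i = p`, which it sends to a nonzero multiple of `X^{pn+q} Y^{(4-p)n-q}`.
Since every `j ≤ 4n` is `pn + q` with `p ≤ 3`, `q ≤ n`, each monomial `X^j Y^{4n-j}` of
`V_{0,4n}` is hit.
-/

lemma pd_eq_pow (i : Fin 4) (m : ℕ) :
    pd i m = ⇑((pderiv i).toLinearMap ^ m : Module.End ℂ (MvPolynomial (Fin 4) ℂ)) :=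
  (Module.End.coe_pow _ m).symm

lemma pd_monomial (i : Fin 4) (m : ℕ) (s : Fin 4 →₀ ℕ) (c : ℂ) :
    pd i m (monomial s c) = monomial (s - Finsupp.single i m) (c * (s i).descFactorial m) := by
  induction m with
  | zero => simp [pd]
  | succ m ih =>
    rw [pd, Function.iterate_succ_apply', ← pd, ih, pderiv_monomial, tsub_tsub,
      ← Finsupp.single_add, Finsupp.tsub_apply, Nat.descFactorial_succ]
    simp only [Finsupp.single_eq_same, Nat.cast_mul]
    congr 1
    ring

noncomputable def pderivMulti (m₀ m₁ m₂ m₃ : ℕ) : Module.End ℂ (MvPolynomial (Fin 4) ℂ) :=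
  (pderiv 0).toLinearMap ^ m₀ * (pderiv 1).toLinearMap ^ m₁ *
    (pderiv 2).toLinearMap ^ m₂ * (pderiv 3).toLinearMap ^ m₃

lemma pderivMulti_apply (m₀ m₁ m₂ m₃ : ℕ) (f : MvPolynomial (Fin 4) ℂ) :
    pderivMulti m₀ m₁ m₂ m₃ f = pd 0 m₀ (pd 1 m₁ (pd 2 m₂ (pd 3 m₃ f))) := by
  simp only [pderivMulti, pd_eq_pow, Module.End.mul_apply]

lemma pderivMulti_X_pow (m₀ m₁ m₂ m₃ e₀ e₁ e₂ e₃ : ℕ) :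
    pderivMulti m₀ m₁ m₂ m₃ (X 0 ^ e₀ * X 1 ^ e₁ * X 2 ^ e₂ * X 3 ^ e₃) =
      ((e₀.descFactorial m₀ * e₁.descFactorial m₁ * e₂.descFactorial m₂ *
        e₃.descFactorial m₃ : ℕ) : ℂ) •
        (X 0 ^ (e₀ - m₀) * X 1 ^ (e₁ - m₁) * X 2 ^ (e₂ - m₂) * X 3 ^ (e₃ - m₃)) := by
  simp only [pderivMulti_apply, X_pow_eq_monomial, monomial_mul, mul_one, pd_monomial,
    smul_monomial]
  refine congr_arg₂ (fun s c => monomial s c) ?_ ?_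
  · ext j; fin_cases j <;> simp
  · simp only [Finsupp.coe_add, Finsupp.coe_tsub, Pi.add_apply, Pi.sub_apply,
      Finsupp.single_apply]
    simp only [Fin.reduceEq, if_true, if_false, add_zero, zero_add, tsub_zero, Nat.cast_mul,
      smul_eq_mul]
    ring

lemma pderivMulti_X_pow_eq_zero {m₀ m₁ m₂ m₃ e₀ e₁ e₂ e₃ : ℕ}
    (h : e₀ < m₀ ∨ e₁ < m₁ ∨ e₂ < m₂ ∨ e₃ < m₃) :
    pderivMulti m₀ m₁ m₂ m₃ (X 0 ^ e₀ * X 1 ^ e₁ * X 2 ^ e₂ * X 3 ^ e₃) = 0 := by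
  rw [pderivMulti_X_pow]
  simp [Nat.descFactorial_eq_zero_iff_lt, or_assoc, h]

lemma biT_eq_sum (a b a' b' r s : ℕ) (F G : MvPolynomial (Fin 4) ℂ) :
    biT a b a' b' r s F G =
      (((a - r).factorial : ℂ) / a.factorial * ((a' - r).factorial / a'.factorial) *
        ((b - s).factorial / b.factorial) * ((b' - s).factorial / b'.factorial)) •
      ∑ k ∈ Finset.range (r + 1), ∑ l ∈ Finset.range (s + 1),
        ((-1 : ℂ) ^ (k + l) * r.choose k * s.choose l) •
          (pderivMulti (r - k) k (s - l) l F * pderivMulti k (r - k) l (s - l) G) := by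
  simp only [biT, pderivMulti_apply]

@[simps]
noncomputable def biTRight (a b a' b' r s : ℕ) (F : MvPolynomial (Fin 4) ℂ) :
    Module.End ℂ (MvPolynomial (Fin 4) ℂ) where
  toFun := biT a b a' b' r s F
  map_add' G H := by
    simp only [biT_eq_sum, map_add, mul_add, smul_add, Finset.sum_add_distrib]
  map_smul' c G := by
    simp only [biT_eq_sum, map_smul, mul_smul_comm, Finset.smul_sum, RingHom.id_apply]
    exact Finset.sum_congr rfl fun _ _ => Finset.sum_congr rfl fun _ _ => by
      rw [smul_comm c, smul_comm c]

/-- Only the term `k = p`, `l = q` of the defining sum survives: every other one differentiates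
`G` more often than its degree in some variable. -/
lemma biT_X_pow_right (a b r s p q : ℕ) (hp : p ≤ r) (hq : q ≤ s) (F : MvPolynomial (Fin 4) ℂ) :
    biT a b r s r s F (X 0 ^ p * X 1 ^ (r - p) * X 2 ^ q * X 3 ^ (s - q)) =
      ((-1 : ℂ) ^ (p + q) * ((a - r).factorial / a.factorial) *
        ((b - s).factorial / b.factorial)) • pderivMulti (r - p) p (s - q) q F := by
  have hG : pderivMulti p (r - p) q (s - q) (X 0 ^ p * X 1 ^ (r - p) * X 2 ^ q * X 3 ^ (s - q)) =
      ((p.factorial * (r - p).factorial * q.factorial * (s - q).factorial : ℕ) : ℂ) • 1 := by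
    simp [pderivMulti_X_pow, Nat.descFactorial_self]
  rw [biT_eq_sum, Finset.sum_eq_single_of_mem p (by simpa using Nat.lt_succ_of_le hp),
    Finset.sum_eq_single_of_mem q (by simpa using Nat.lt_succ_of_le hq), hG]
  · rw [mul_smul_one, smul_smul, smul_smul]
    congr 1
    have hr : (r.choose p * p.factorial * (r - p).factorial : ℂ) = r.factorial := by
      exact_mod_cast Nat.choose_mul_factorial_mul_factorial hp
    have hs : (s.choose q * q.factorial * (s - q).factorial : ℂ) = s.factorial := by
      exact_mod_cast Nat.choose_mul_factorial_mul_factorial hq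
    have hr0 : (r.factorial : ℂ) ≠ 0 := Nat.cast_ne_zero.mpr (Nat.factorial_ne_zero _)
    have hs0 : (s.factorial : ℂ) ≠ 0 := Nat.cast_ne_zero.mpr (Nat.factorial_ne_zero _)
    simp only [Nat.sub_self, Nat.factorial_zero, Nat.cast_one, Nat.cast_mul]
    field_simp
    rw [← hr, ← hs]
    ring
  · intro l hl hlq
    rw [pderivMulti_X_pow_eq_zero (by simp at hl; omega), mul_zero, smul_zero]
  · intro k hk hkp
    refine Finset.sum_eq_zero fun l hl => ?_
    rw [pderivMulti_X_pow_eq_zero (by simp at hk; omega), mul_zero, smul_zero]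

noncomputable def vForm (n : ℕ) : MvPolynomial (Fin 4) ℂ :=
  ∑ i ∈ Finset.range 4, ((Nat.choose 3 i * (5 * n).choose ((i + 1) * n) : ℕ) : ℂ) •
    (X 0 ^ (3 - i) * X 1 ^ i * X 2 ^ ((i + 1) * n) * X 3 ^ ((4 - i) * n))

lemma vForm_eq (n : ℕ) :
    (((5 * n).choose n : ℂ)) • (X 2 ^ n * X 3 ^ (4 * n) * X 0 ^ 3) +
      ((3 * ((5 * n).choose (2 * n)) : ℂ)) • (X 2 ^ (2 * n) * X 3 ^ (3 * n) * X 0 ^ 2 * X 1) +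
      ((3 * ((5 * n).choose (2 * n)) : ℂ)) • (X 2 ^ (3 * n) * X 3 ^ (2 * n) * X 0 * X 1 ^ 2) +
      (((5 * n).choose n : ℂ)) • (X 2 ^ (4 * n) * X 3 ^ n * X 1 ^ 3) = vForm n := by
  simp only [vForm, Finset.sum_range_succ, Finset.sum_range_zero, smul_eq_C_mul]
  rw [← Nat.choose_symm_of_eq_add (show 5 * n = n + 4 * n by ring),
    ← Nat.choose_symm_of_eq_add (show 5 * n = 2 * n + 3 * n by ring)]
  simp only [map_natCast, C_mul, zero_add, one_mul, tsub_zero, pow_zero, mul_one, Nat.reduceAdd,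
    Nat.cast_mul, Nat.cast_ofNat, Nat.add_one_sub_one, pow_one, Nat.choose_succ_self_right,
    Nat.reduceSub, Nat.choose_self, tsub_self, Nat.choose_zero_right, Nat.choose_one_right]
  ring

lemma biT_vForm_X_pow (n p q : ℕ) (hp : p ≤ 3) (hq : q ≤ n) :
    ∃ c : ℂ, c ≠ 0 ∧
      biT 3 (5 * n) 3 n 3 n (vForm n) (X 0 ^ p * X 1 ^ (3 - p) * X 2 ^ q * X 3 ^ (n - q)) =
        c • (X 2 ^ (p * n + q) * X 3 ^ ((4 - p) * n - q)) := by
  rw [biT_X_pow_right _ _ _ _ _ _ hp hq, vForm, map_sum,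
    Finset.sum_eq_single_of_mem p (by simpa using Nat.lt_succ_of_le hp)]
  · rw [map_smul, pderivMulti_X_pow, smul_smul, smul_smul]
    have hexp : (p + 1) * n - (n - q) = p * n + q := by rw [add_one_mul]; omega
    simp only [Nat.sub_self, hexp, pow_zero, one_mul]
    refine ⟨_, ?_, rfl⟩
    have hchoose : (5 * n).choose ((p + 1) * n) ≠ 0 :=
      (Nat.choose_pos (by interval_cases p <;> omega)).ne'
    have hdesc₁ : ((p + 1) * n).descFactorial (n - q) ≠ 0 := by
      rw [Ne, Nat.descFactorial_eq_zero_iff_lt, not_lt, add_one_mul]; omega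
    have hdesc₂ : ((4 - p) * n).descFactorial q ≠ 0 := by
      rw [Ne, Nat.descFactorial_eq_zero_iff_lt, not_lt]
      exact hq.trans (Nat.le_mul_of_pos_left n (by omega))
    simp [Nat.factorial_ne_zero, Nat.choose_eq_zero_iff, hp, hchoose, hdesc₁, hdesc₂]
  · intro i hi hip
    rw [map_smul, pderivMulti_X_pow_eq_zero (by simp at hi; omega), smul_zero]

lemma exists_le_eq_mul_add {m n j : ℕ} (hj : j ≤ (m + 1) * n) :
    ∃ p ≤ m, ∃ q ≤ n, j = p * n + q := by
  induction m with
  | zero => exact ⟨0, le_rfl, j, by simpa using hj, by simp⟩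
  | succ m ih =>
    by_cases h : j ≤ (m + 1) * n
    · obtain ⟨p, hp, q, hq, rfl⟩ := ih h
      exact ⟨p, hp.trans m.le_succ, q, hq, rfl⟩
    · refine ⟨m + 1, le_rfl, j - (m + 1) * n, ?_, by omega⟩
      rw [add_mul _ 1 n] at hj
      omega

theorem case_b0_Tv_surjective_general (n : ℕ) :
    ∀ u ∈ Vab 0 (4 * n), ∃ w ∈ Vab 3 n,
      biT 3 (5 * n) 3 n 3 n
        ((((5 * n).choose n : ℂ)) • (X 2 ^ n * X 3 ^ (4 * n) * X 0 ^ 3) +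
         ((3 * ((5 * n).choose (2 * n)) : ℂ)) •
            (X 2 ^ (2 * n) * X 3 ^ (3 * n) * X 0 ^ 2 * X 1) +
         ((3 * ((5 * n).choose (2 * n)) : ℂ)) •
            (X 2 ^ (3 * n) * X 3 ^ (2 * n) * X 0 * X 1 ^ 2) +
         (((5 * n).choose n : ℂ)) • (X 2 ^ (4 * n) * X 3 ^ n * X 1 ^ 3))
        w = u := by
  rw [vForm_eq]
  suffices Vab 0 (4 * n) ≤ (Vab 3 n).map (biTRight 3 (5 * n) 3 n 3 n (vForm n)) by
    intro u hu
    obtain ⟨w, hw, rfl⟩ := this hu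
    exact ⟨w, hw, rfl⟩
  refine Submodule.span_le.mpr ?_
  rintro _ ⟨i, hi, j, hj, rfl⟩
  obtain rfl : i = 0 := Nat.le_zero.mp hi
  obtain ⟨p, hp, q, hq, rfl⟩ := exists_le_eq_mul_add (m := 3) (by omega : j ≤ (3 + 1) * n)
  obtain ⟨c, hc, hT⟩ := biT_vForm_X_pow n p q hp hq
  refine ⟨c⁻¹ • _, Submodule.smul_mem _ _ (Submodule.subset_span ⟨p, hp, q, hq, rfl⟩), ?_⟩
  rw [map_smul, biTRight_apply, hT, smul_smul, inv_mul_cancel₀ hc, one_smul]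
  rw [Nat.sub_mul, Nat.sub_sub]
  simp

/-- §4.1, case `b ≡ 0 (mod 5)`: for `n` odd and
`v = binom(5n,n) XⁿY⁴ⁿ x³ + 3 binom(5n,2n) X²ⁿY³ⁿ x²y + 3 binom(5n,2n) X³ⁿY²ⁿ xy²
  + binom(5n,n) X⁴ⁿYⁿ y³ ∈ V_{3,5n}`,
the map `T^{(3,n)}(v,·) : V_{3,n} → V_{0,4n}` is surjective. -/
theorem case_b0_Tv_surjective (n : ℕ) (hn : Odd n) :
    ∀ u ∈ Vab 0 (4 * n), ∃ w ∈ Vab 3 n,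
      biT 3 (5 * n) 3 n 3 n
        ((((5 * n).choose n : ℂ)) • (X 2 ^ n * X 3 ^ (4 * n) * X 0 ^ 3) +
         ((3 * ((5 * n).choose (2 * n)) : ℂ)) •
            (X 2 ^ (2 * n) * X 3 ^ (3 * n) * X 0 ^ 2 * X 1) +
         ((3 * ((5 * n).choose (2 * n)) : ℂ)) •
            (X 2 ^ (3 * n) * X 3 ^ (2 * n) * X 0 * X 1 ^ 2) +
         (((5 * n).choose n : ℂ)) • (X 2 ^ (4 * n) * X 3 ^ n * X 1 ^ 3))
        w = u :=
  case_b0_Tv_surjective_general n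
end
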